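/- arXiv:1803.01905 — 2 statements merged into one kernel-verified Lean document; each statement's English description precedes it below -/
import Mathlib

section
/- One-step loss decrease for gradient descent on the exponential loss: if the fixed step size satisfies 0 < η < 1/L(w(0)), then for every t, L(w(t+1)) ≤ L(w(t)) − η‖∇L(w(t))‖² + (η²/2)‖∇L(w(t))‖² L(w(t)). -/
open scoped RealInnerProductSpace BigOperators
open Filter

/-- The exponential loss `L(w) = ∑ₙ exp(-⟨w, xₙ⟩)`. -/
noncomputable def expLoss {d N : ℕ} (x : Fin N → EuclideanSpace ℝ (Fin d))
    (w : EuclideanSpace ℝ (Fin d)) : ℝ :=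
  ∑ n, Real.exp (-⟪w, x n⟫)

/-- The gradient of the exponential loss, `∇L(w) = -∑ₙ exp(-⟨w, xₙ⟩) xₙ`. -/
noncomputable def expLossGrad {d N : ℕ} (x : Fin N → EuclideanSpace ℝ (Fin d))
    (w : EuclideanSpace ℝ (Fin d)) : EuclideanSpace ℝ (Fin d) :=
  -∑ n, Real.exp (-⟪w, x n⟫) • x n

/-!
Put `g = ∇L(w)` and `sₙ = η ⟪g, xₙ⟫`, so that the n-th summand of `L(w - η g)` is
`exp (-⟪w, xₙ⟫) * exp sₙ` with `sₙ ^ 2 ≤ η ^ 2 ‖g‖ ^ 2`. In the Taylor remainder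
`e^s - 1 - s = s² ∫₀¹ (1 - t) e^{ts} dt`, convexity gives `e^{ts} ≤ (1 - t) + t e^s`, hence
`e^s ≤ 1 + s + s²/3 + (s²/6) e^s`. Summing over `n`, the new loss `L'` is bounded by
`L - η‖g‖² + (η²‖g‖²/3) L + (η²‖g‖²/6) L'`. As `η L ≤ 1` (so also `η²‖g‖² ≤ 1`), this first
forces `L' ≤ L`, and then `1/3 + 1/6 = 1/2` gives the claim. Because the loss decreases,
`η L(w t) ≤ η L(w 0) < 1` persists along the iteration.
-/

open Real Set

theorem Real.six_sub_sq_mul_exp_le (s : ℝ) : (6 - s ^ 2) * exp s ≤ 6 + 6 * s + 2 * s ^ 2 := by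
  -- Dividing by `exp s` makes the derivative factor as `2 t (1 - (1 + t) e^{-t})`.
  let f : ℝ → ℝ := fun t => (6 + 6 * t + 2 * t ^ 2) * exp (-t) + t ^ 2
  have hf : ∀ t, HasDerivAt f (2 * t * (1 - (1 + t) * exp (-t))) t := by
    intro t
    have hp := (((hasDerivAt_id' t).const_mul 6).const_add 6).add
      ((hasDerivAt_pow 2 t).const_mul 2)
    exact ((hp.mul (hasDerivAt_neg' t).exp).add (hasDerivAt_pow 2 t)).congr_deriv
      (by norm_num; ring)
  have hf' : ∀ t, 0 ≤ t * deriv f t := by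
    intro t
    have : (1 + t) * exp (-t) ≤ 1 := by
      calc (1 + t) * exp (-t) ≤ exp t * exp (-t) := by
            gcongr; linarith [add_one_le_exp t]
        _ = 1 := by rw [← exp_add, add_neg_cancel, exp_zero]
    rw [(hf t).deriv]
    nlinarith [sq_nonneg t]
  have hmin : IsMinOn f univ 0 := by
    refine isMinOn_univ_of_deriv (hf 0).continuousAt
      (fun t _ => (hf t).differentiableAt.differentiableWithinAt)
      (fun t _ => (hf t).differentiableAt.differentiableWithinAt) (fun t ht => ?_) (fun t ht => ?_)
    · have := hf' t; simp only [mem_Iio] at ht; nlinarith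
    · have := hf' t; simp only [mem_Ioi] at ht; nlinarith
  have h : 6 ≤ (6 + 6 * s + 2 * s ^ 2) * exp (-s) + s ^ 2 := by
    simpa [f] using hmin (mem_univ s)
  have h' := mul_le_mul_of_nonneg_right h (exp_pos s).le
  rw [add_mul, mul_assoc, ← exp_add, neg_add_cancel, exp_zero] at h'
  linarith

theorem Real.exp_le_of_sq_le {s c : ℝ} (hs : s ^ 2 ≤ c) :
    exp s ≤ 1 + s + c / 3 + c / 6 * exp s := by
  nlinarith [six_sub_sq_mul_exp_le s, exp_pos s]

section ExpLoss

variable {d N : ℕ} (x : Fin N → EuclideanSpace ℝ (Fin d))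

theorem expLoss_nonneg (w : EuclideanSpace ℝ (Fin d)) : 0 ≤ expLoss x w :=
  Finset.sum_nonneg fun _ _ => (exp_pos _).le

theorem norm_expLossGrad_le (hx : ∀ n, ‖x n‖ ≤ 1) (w : EuclideanSpace ℝ (Fin d)) :
    ‖expLossGrad x w‖ ≤ expLoss x w := by
  rw [expLossGrad, norm_neg]
  refine (norm_sum_le _ _).trans (Finset.sum_le_sum fun n _ => ?_)
  rw [norm_smul, norm_of_nonneg (exp_pos _).le]
  exact mul_le_of_le_one_right (exp_pos _).le (hx n)

theorem sum_exp_mul_inner_eq_neg_inner_expLossGrad (w v : EuclideanSpace ℝ (Fin d)) :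
    ∑ n, exp (-⟪w, x n⟫) * ⟪v, x n⟫ = -⟪v, expLossGrad x w⟫ := by
  simp only [expLossGrad, inner_neg_right, neg_neg, inner_sum, real_inner_smul_right]

theorem expLoss_sub_le (hx : ∀ n, ‖x n‖ ≤ 1) (w v : EuclideanSpace ℝ (Fin d)) :
    expLoss x (w - v) ≤ expLoss x w - ⟪v, expLossGrad x w⟫ + ‖v‖ ^ 2 / 3 * expLoss x w
      + ‖v‖ ^ 2 / 6 * expLoss x (w - v) := by
  have hterm : ∀ n, exp (-⟪w - v, x n⟫) ≤ exp (-⟪w, x n⟫) + exp (-⟪w, x n⟫) * ⟪v, x n⟫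
      + ‖v‖ ^ 2 / 3 * exp (-⟪w, x n⟫) + ‖v‖ ^ 2 / 6 * exp (-⟪w - v, x n⟫) := by
    intro n
    have hsq : ⟪v, x n⟫ ^ 2 ≤ ‖v‖ ^ 2 := by
      refine sq_le_sq' ?_ ?_ <;>
        nlinarith [abs_le.mp (abs_real_inner_le_norm v (x n)), hx n, norm_nonneg v]
    have hsplit : exp (-⟪w - v, x n⟫) = exp (-⟪w, x n⟫) * exp ⟪v, x n⟫ := by
      rw [← exp_add, inner_sub_left]; ring_nf
    rw [hsplit]
    nlinarith [mul_le_mul_of_nonneg_left (exp_le_of_sq_le hsq) (exp_pos (-⟪w, x n⟫)).le]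
  calc expLoss x (w - v) ≤ ∑ n, (exp (-⟪w, x n⟫) + exp (-⟪w, x n⟫) * ⟪v, x n⟫
      + ‖v‖ ^ 2 / 3 * exp (-⟪w, x n⟫) + ‖v‖ ^ 2 / 6 * exp (-⟪w - v, x n⟫)) :=
        Finset.sum_le_sum fun n _ => hterm n
    _ = _ := by
      simp only [Finset.sum_add_distrib, ← Finset.mul_sum,
        sum_exp_mul_inner_eq_neg_inner_expLossGrad, expLoss]
      ring

theorem expLoss_gradientStep_le (w : EuclideanSpace ℝ (Fin d)) {η : ℝ} (hx : ∀ n, ‖x n‖ ≤ 1)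
    (hη : 0 < η) (hηL : η * expLoss x w ≤ 1) :
    expLoss x (w - η • expLossGrad x w) ≤ expLoss x w - η * ‖expLossGrad x w‖ ^ 2
      + (η ^ 2 / 2) * ‖expLossGrad x w‖ ^ 2 * expLoss x w := by
  set L := expLoss x w
  set L' := expLoss x (w - η • expLossGrad x w)
  set A := ‖expLossGrad x w‖ ^ 2
  have key := expLoss_sub_le x hx w (η • expLossGrad x w)
  rw [real_inner_smul_left, real_inner_self_eq_norm_sq, norm_smul, mul_pow, norm_eq_abs,
    sq_abs] at key
  have hA : 0 ≤ A := sq_nonneg _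
  have hηA : η ^ 2 * A ≤ 1 := by
    have hAL : A ≤ L ^ 2 := pow_le_pow_left₀ (norm_nonneg _) (norm_expLossGrad_le x hx w) 2
    nlinarith [mul_nonneg hη.le (expLoss_nonneg x w)]
  -- `key` bounds `L'` partly by itself; since `η ^ 2 * A < 6` this first forces `L' ≤ L`.
  have hdecr : L' ≤ L := by
    by_contra! h
    nlinarith [mul_le_mul_of_nonneg_left hηL (mul_nonneg hη.le hA)]
  nlinarith [mul_nonneg (mul_nonneg (sq_nonneg η) hA) (sub_nonneg.mpr hdecr)]

theorem expLoss_gradientStep_le_self (w : EuclideanSpace ℝ (Fin d)) {η : ℝ} (hx : ∀ n, ‖x n‖ ≤ 1)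
    (hη : 0 < η) (hηL : η * expLoss x w ≤ 1) :
    expLoss x (w - η • expLossGrad x w) ≤ expLoss x w := by
  have := expLoss_gradientStep_le x w hx hη hηL
  nlinarith [mul_le_mul_of_nonneg_left hηL (mul_nonneg hη.le (sq_nonneg ‖expLossGrad x w‖))]

end ExpLoss

theorem gd_expLoss_one_step_decrease_general
    {d N : ℕ} (x : Fin N → EuclideanSpace ℝ (Fin d))
    (hx : ∀ n, ‖x n‖ ≤ 1)
    (η : ℝ) (w : ℕ → EuclideanSpace ℝ (Fin d))
    (hη : 0 < η) (hη' : η < 1 / expLoss x (w 0))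
    (hGD : ∀ t : ℕ, w (t + 1) = w t - η • expLossGrad x (w t)) :
    ∀ t : ℕ, expLoss x (w (t + 1)) ≤
      expLoss x (w t) - η * ‖expLossGrad x (w t)‖ ^ 2
        + (η ^ 2 / 2) * ‖expLossGrad x (w t)‖ ^ 2 * expLoss x (w t) := by
  -- `η < 1 / L(w 0)` with `η > 0` rules out the junk value `1 / 0 = 0`.
  have hL₀ : 0 < expLoss x (w 0) := by
    by_contra! h
    rw [le_antisymm h (expLoss_nonneg x _), div_zero] at hη'
    exact hη.not_gt hη'
  have hηL : ∀ t, η * expLoss x (w t) ≤ 1 := by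
    intro t
    induction t with
    | zero => exact ((lt_div_iff₀ hL₀).mp hη').le
    | succ t ih =>
      rw [hGD t]
      exact (mul_le_mul_of_nonneg_left (expLoss_gradientStep_le_self x _ hx hη ih) hη.le).trans ih
  intro t
  rw [hGD t]
  exact expLoss_gradientStep_le x _ hx hη (hηL t)

/-- One-step loss decrease of gradient descent on the exponential loss:
`L(w(t+1)) ≤ L(w(t)) − η‖∇L(w(t))‖² + (η²/2)‖∇L(w(t))‖² L(w(t))`. -/
theorem gd_expLoss_one_step_decrease
    {d N : ℕ} (x : Fin N → EuclideanSpace ℝ (Fin d))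
    (hx : ∀ n, ‖x n‖ ≤ 1)
    (hsep : ∃ wstar : EuclideanSpace ℝ (Fin d), ∀ n, 0 < ⟪wstar, x n⟫)
    (η : ℝ) (w : ℕ → EuclideanSpace ℝ (Fin d))
    (hη : 0 < η) (hη' : η < 1 / expLoss x (w 0))
    (hGD : ∀ t : ℕ, w (t + 1) = w t - η • expLossGrad x (w t)) :
    ∀ t : ℕ, expLoss x (w (t + 1)) ≤
      expLoss x (w t) - η * ‖expLossGrad x (w t)‖ ^ 2
        + (η ^ 2 / 2) * ‖expLossGrad x (w t)‖ ^ 2 * expLoss x (w t) :=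
  gd_expLoss_one_step_decrease_general x hx η w hη hη' hGD
end

section
/- Logarithmic growth of the iterate norm for gradient descent on the exponential loss: if the fixed step size satisfies 0 < η < 1/L(w(0)), then for every t ≥ 0, ‖w(t+1)‖ ≥ log(ηγ²(t+1) + 1/L(w(0))). -/
open scoped RealInnerProductSpace BigOperators
open Filter

/-!
Along the ray `w_s = w - s • ∇L(w)` the derivative of `s ↦ 1 / L(w_s)` is
`⟪∇L(w), ∇L(w_s)⟫ / L(w_s)²`. As long as `s L(w) ≤ 1` the gradients are cocoercive,
`‖∇L(w_s)‖² ≤ ⟪∇L(w), ∇L(w_s)⟫` (a third-order Taylor bound for `exp` and a weighted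
Cauchy–Schwarz inequality), while testing `∇L(v)` against a max-margin direction gives
`‖∇L(v)‖ ≥ γ L(v)`. So each step raises `1 / L` by at least `ηγ²`; the loss decreases, so the
step-size condition persists, and `L(w) ≥ exp (-‖w‖)` turns `1 / L(w(t)) ≥ 1 / L(w(0)) + ηγ² t`
into the logarithmic lower bound.
-/

open Real Finset Set

theorem one_sub_exp_neg_mul_mul_nonneg {s : ℝ} (hs : 0 ≤ s) (b : ℝ) :
    0 ≤ (1 - exp (-(s * b))) * b := by
  rcases le_total 0 b with hb | hb
  · exact mul_nonneg (sub_nonneg.2 (exp_le_one_iff.2 (by nlinarith))) hb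
  · exact mul_nonneg_of_nonpos_of_nonpos (sub_nonpos.2 (one_le_exp_iff.2 (by nlinarith))) hb

theorem one_sub_exp_neg_sq_le {c : ℝ} (hc : |c| ≤ 1) :
    (1 - exp (-c)) ^ 2 ≤ c * (1 - exp (-c)) * (1 - c / 2 + 2 / 9 * c ^ 2) := by
  have htaylor : |exp (-c) - (1 - c + c ^ 2 / 2)| ≤ |c| ^ 3 * (2 / 9) := by
    have := exp_bound (x := -c) (by rwa [abs_neg]) (n := 3) (by norm_num)
    norm_num [Finset.sum_range_succ, Nat.factorial] at this
    convert this using 2; ring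
  obtain ⟨hlo, hhi⟩ := abs_le.1 htaylor
  rcases le_total 0 c with h | h
  · have hE : 0 ≤ 1 - exp (-c) := sub_nonneg.2 (exp_le_one_iff.2 (by linarith))
    rw [abs_of_nonneg h] at hlo
    nlinarith [mul_nonneg hE h]
  · have hE : 1 - exp (-c) ≤ 0 := sub_nonpos.2 (one_le_exp_iff.2 (by linarith))
    rw [abs_of_nonpos h] at hhi
    nlinarith [mul_nonneg_of_nonpos_of_nonpos hE h]

theorem inv_add_mul_le_inv_of_hasDerivAt {f f' : ℝ → ℝ} {a b c : ℝ} (hab : a ≤ b)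
    (hf : ∀ s ∈ Icc a b, HasDerivAt f (f' s) s) (hpos : ∀ s ∈ Icc a b, 0 < f s)
    (hc : ∀ s ∈ Icc a b, c * f s ^ 2 ≤ -f' s) :
    (f a)⁻¹ + c * (b - a) ≤ (f b)⁻¹ := by
  have hφ : ∀ s ∈ Icc a b,
      HasDerivAt (fun s => (f s)⁻¹ - c * s) (-f' s / f s ^ 2 - c) s := fun s hs =>
    ((hf s hs).inv (hpos s hs).ne').sub (by simpa using (hasDerivAt_id s).const_mul c)
  have hmono : MonotoneOn (fun s => (f s)⁻¹ - c * s) (Icc a b) := by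
    refine monotoneOn_of_hasDerivWithinAt_nonneg (convex_Icc a b)
      (fun s hs => (hφ s hs).continuousAt.continuousWithinAt)
      (fun s hs => (hφ s (interior_subset hs)).hasDerivWithinAt) fun s hs => ?_
    have hs := interior_subset hs
    rw [sub_nonneg, le_div_iff₀ (pow_pos (hpos s hs) 2)]
    linarith [hc s hs]
  have := hmono (left_mem_Icc.2 hab) (right_mem_Icc.2 hab) hab
  simp only at this
  linarith

theorem sq_sum_abs_mul_one_sub_exp_neg_le {ι : Type*} [Fintype ι] {p b : ι → ℝ} {s M : ℝ}
    (hp : ∀ i, 0 ≤ p i) (hs : 0 ≤ s) (hsp : s * ∑ i, p i ≤ 1) (hb : ∀ i, |b i| ≤ M)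
    (hsM : s * M ≤ 1) (hpb : ∑ i, p i * b i = M ^ 2) :
    (∑ i, |p i * (1 - exp (-(s * b i)))|) ^ 2 ≤ ∑ i, p i * (1 - exp (-(s * b i))) * b i := by
  -- `one_sub_exp_neg_sq_le` gives `yᵢ² ≤ (yᵢ bᵢ) Rᵢ` for `yᵢ = pᵢ (1 - exp (-s bᵢ))`, and
  -- `∑ R ≤ 1`, so Cauchy–Schwarz with these weights bounds `(∑ |yᵢ|)²` by `∑ yᵢ bᵢ`.
  set R : ι → ℝ := fun i => s * p i * (1 - s * b i / 2 + 2 / 9 * (s * b i) ^ 2)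
  have hyb : ∀ i, 0 ≤ p i * (1 - exp (-(s * b i))) * b i := fun i => by
    rw [mul_assoc]; exact mul_nonneg (hp i) (one_sub_exp_neg_mul_mul_nonneg hs (b i))
  have hR : ∀ i, 0 ≤ R i := fun i =>
    mul_nonneg (mul_nonneg hs (hp i)) (by nlinarith [sq_nonneg (s * b i - 9 / 8)])
  have hpointwise : ∀ i, |p i * (1 - exp (-(s * b i)))| ^ 2
      ≤ p i * (1 - exp (-(s * b i))) * b i * R i := fun i => by
    have hsb : |s * b i| ≤ 1 := by
      rw [abs_mul, abs_of_nonneg hs]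
      exact (mul_le_mul_of_nonneg_left (hb i) hs).trans hsM
    have := mul_le_mul_of_nonneg_left (one_sub_exp_neg_sq_le hsb) (sq_nonneg (p i))
    rw [sq_abs, mul_pow]
    exact this.trans_eq (by ring)
  have hsumR : ∑ i, R i ≤ 1 := by
    have hpb2 : ∑ i, p i * b i ^ 2 ≤ (∑ i, p i) * M ^ 2 := by
      rw [sum_mul]
      exact sum_le_sum fun i _ => mul_le_mul_of_nonneg_left
        (sq_le_sq' (abs_le.1 (hb i)).1 (abs_le.1 (hb i)).2) (hp i)
    have hexpand : ∑ i, R i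
        = s * ∑ i, p i - s ^ 2 / 2 * ∑ i, p i * b i + 2 / 9 * s ^ 3 * ∑ i, p i * b i ^ 2 := by
      simp only [R, mul_sum, ← sum_sub_distrib, ← sum_add_distrib]
      exact sum_congr rfl fun i _ => by ring
    rw [hexpand, hpb]
    nlinarith [mul_le_mul_of_nonneg_left hpb2 (pow_nonneg hs 3), sq_nonneg (s * M),
      mul_le_mul_of_nonneg_right hsp (sq_nonneg (s * M))]
  calc (∑ i, |p i * (1 - exp (-(s * b i)))|) ^ 2
      ≤ (∑ i, p i * (1 - exp (-(s * b i))) * b i) * ∑ i, R i :=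
        sum_sq_le_sum_mul_sum_of_sq_le_mul _ (fun i _ => hyb i) (fun i _ => hR i)
          fun i _ => hpointwise i
    _ ≤ ∑ i, p i * (1 - exp (-(s * b i))) * b i :=
        mul_le_of_le_one_right (sum_nonneg fun i _ => hyb i) hsumR

section InnerProductSpace

variable {E ι : Type*} [NormedAddCommGroup E] [InnerProductSpace ℝ E] [Fintype ι] {x : ι → E}

theorem norm_sum_smul_le_sum_abs (hx : ∀ i, ‖x i‖ ≤ 1) (c : ι → ℝ) :
    ‖∑ i, c i • x i‖ ≤ ∑ i, |c i| :=
  (norm_sum_le _ _).trans <| sum_le_sum fun i _ => by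
    rw [norm_smul, Real.norm_eq_abs]
    exact mul_le_of_le_one_right (abs_nonneg _) (hx i)

theorem mul_sum_le_norm_sum_smul {γ : ℝ} {u : E} (hu : ‖u‖ ≤ 1) (hγ : ∀ i, γ ≤ ⟪u, x i⟫)
    {μ : ι → ℝ} (hμ : ∀ i, 0 ≤ μ i) : γ * ∑ i, μ i ≤ ‖∑ i, μ i • x i‖ :=
  calc γ * ∑ i, μ i ≤ ∑ i, μ i * ⟪u, x i⟫ := by
        rw [mul_sum]
        exact sum_le_sum fun i _ => by
          rw [mul_comm]; exact mul_le_mul_of_nonneg_left (hγ i) (hμ i)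
    _ = ⟪u, ∑ i, μ i • x i⟫ := by simp only [inner_sum, real_inner_smul_right]
    _ ≤ ‖u‖ * ‖∑ i, μ i • x i‖ := real_inner_le_norm _ _
    _ ≤ ‖∑ i, μ i • x i‖ := mul_le_of_le_one_left (norm_nonneg _) hu

theorem norm_sq_le_inner_sum_exp_smul (hx : ∀ i, ‖x i‖ ≤ 1) {p : ι → ℝ} (hp : ∀ i, 0 ≤ p i)
    {s : ℝ} (hs : 0 ≤ s) (hsp : s * ∑ i, p i ≤ 1) {g : E} (hg : g = ∑ i, p i • x i) :
    ‖∑ i, (p i * exp (-(s * ⟪g, x i⟫))) • x i‖ ^ 2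
      ≤ ⟪g, ∑ i, (p i * exp (-(s * ⟪g, x i⟫))) • x i⟫ := by
  -- The claim `‖g - Δ‖² ≤ ⟪g, g - Δ⟫` is equivalent to `‖Δ‖² ≤ ⟪Δ, g⟫`.
  set Δ := ∑ i, (p i * (1 - exp (-(s * ⟪g, x i⟫)))) • x i
  have hsplit : ∑ i, (p i * exp (-(s * ⟪g, x i⟫))) • x i = g - Δ := by
    conv_rhs => rw [hg]
    rw [← sum_sub_distrib]
    exact sum_congr rfl fun i _ => by rw [← sub_smul]; ring_nf
  have hg_norm : ‖g‖ ≤ ∑ i, p i := by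
    rw [hg]
    exact (norm_sum_smul_le_sum_abs hx p).trans_eq (sum_congr rfl fun i _ => abs_of_nonneg (hp i))
  have hg_sq : ∑ i, p i * ⟪g, x i⟫ = ‖g‖ ^ 2 :=
    calc ∑ i, p i * ⟪g, x i⟫ = ⟪g, ∑ i, p i • x i⟫ := by simp only [inner_sum, real_inner_smul_right]
      _ = ‖g‖ ^ 2 := by rw [← hg, real_inner_self_eq_norm_sq]
  have hΔ : ‖Δ‖ ^ 2 ≤ ⟪Δ, g⟫ :=
    calc ‖Δ‖ ^ 2 ≤ (∑ i, |p i * (1 - exp (-(s * ⟪g, x i⟫)))|) ^ 2 :=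
          pow_le_pow_left₀ (norm_nonneg _) (norm_sum_smul_le_sum_abs hx _) 2
      _ ≤ ∑ i, p i * (1 - exp (-(s * ⟪g, x i⟫))) * ⟪g, x i⟫ :=
          sq_sum_abs_mul_one_sub_exp_neg_le hp hs hsp
            (fun i => (abs_real_inner_le_norm _ _).trans
              (mul_le_of_le_one_right (norm_nonneg _) (hx i)))
            ((mul_le_mul_of_nonneg_left hg_norm hs).trans hsp) hg_sq
      _ = ⟪Δ, g⟫ := by
            rw [real_inner_comm]; simp only [Δ, inner_sum, real_inner_smul_right]
  rw [hsplit, norm_sub_sq_real, inner_sub_right, real_inner_self_eq_norm_sq, real_inner_comm]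
  linarith

theorem pos_of_mem_upperBounds_margins (hsep : ∃ w : E, ∀ i, 0 < ⟪w, x i⟫)
    (hne : (univ : Finset ι).Nonempty) {γ : ℝ}
    (hγ : γ ∈ upperBounds {m : ℝ | ∃ u : E, ‖u‖ = 1 ∧ m = univ.inf' hne (fun i => ⟪u, x i⟫)}) :
    0 < γ := by
  obtain ⟨w, hw⟩ := hsep
  obtain ⟨i₀, -⟩ := id hne
  have hw0 : w ≠ 0 := by
    rintro rfl
    simpa using hw i₀
  refine lt_of_lt_of_le ?_ (hγ ⟨‖w‖⁻¹ • w, norm_smul_inv_norm hw0, rfl⟩)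
  rw [lt_inf'_iff]
  intro i _
  rw [real_inner_smul_left]
  exact mul_pos (inv_pos.2 (norm_pos_iff.2 hw0)) (hw i)

end InnerProductSpace

section ExpLoss

variable {d N : ℕ} {x : Fin N → EuclideanSpace ℝ (Fin d)}

theorem expLoss_pos [Nonempty (Fin N)] (w : EuclideanSpace ℝ (Fin d)) : 0 < expLoss x w :=
  sum_pos (fun _ _ => exp_pos _) univ_nonempty

theorem log_inv_expLoss_le_norm (hx : ∀ n, ‖x n‖ ≤ 1) [Nonempty (Fin N)]
    (w : EuclideanSpace ℝ (Fin d)) : log (expLoss x w)⁻¹ ≤ ‖w‖ := by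
  obtain ⟨n⟩ := ‹Nonempty (Fin N)›
  have hinner : ⟪w, x n⟫ ≤ ‖w‖ :=
    (real_inner_le_norm _ _).trans (mul_le_of_le_one_right (norm_nonneg _) (hx n))
  have hexp : exp (-‖w‖) ≤ expLoss x w :=
    (exp_le_exp.2 (neg_le_neg hinner)).trans
      (single_le_sum (f := fun n => exp (-⟪w, x n⟫)) (fun n _ => (exp_pos _).le) (mem_univ n))
  rw [log_inv, neg_le]
  simpa using log_le_log (exp_pos _) hexp

theorem mul_expLoss_le_norm_expLossGrad {γ : ℝ} {u : EuclideanSpace ℝ (Fin d)} (hu : ‖u‖ ≤ 1)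
    (hγ : ∀ n, γ ≤ ⟪u, x n⟫) (w : EuclideanSpace ℝ (Fin d)) :
    γ * expLoss x w ≤ ‖expLossGrad x w‖ := by
  rw [expLossGrad, norm_neg]
  exact mul_sum_le_norm_sum_smul hu hγ fun n => (exp_pos _).le

theorem hasDerivAt_expLoss_sub_smul (w v : EuclideanSpace ℝ (Fin d)) (s : ℝ) :
    HasDerivAt (fun s => expLoss x (w - s • v)) (-⟪v, expLossGrad x (w - s • v)⟫) s := by
  have hline : ∀ n s, -⟪w - s • v, x n⟫ = s * ⟪v, x n⟫ - ⟪w, x n⟫ := fun n s => by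
    rw [inner_sub_left, real_inner_smul_left]; ring
  have hderiv : HasDerivAt (fun s => ∑ n, exp (s * ⟪v, x n⟫ - ⟪w, x n⟫))
      (∑ n, exp (s * ⟪v, x n⟫ - ⟪w, x n⟫) * ⟪v, x n⟫) s :=
    HasDerivAt.fun_sum fun n _ =>
      (((hasDerivAt_id s).mul_const ⟪v, x n⟫).sub_const ⟪w, x n⟫).exp.congr_deriv (by simp)
  convert hderiv using 1
  · ext s; simp only [expLoss, hline]
  · simp only [expLossGrad, inner_neg_right, neg_neg, inner_sum, real_inner_smul_right, hline,
      mul_comm]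

theorem norm_sq_expLossGrad_le_inner (hx : ∀ n, ‖x n‖ ≤ 1) (w : EuclideanSpace ℝ (Fin d))
    {s : ℝ} (hs : 0 ≤ s) (hsL : s * expLoss x w ≤ 1) :
    ‖expLossGrad x (w - s • expLossGrad x w)‖ ^ 2
      ≤ ⟪expLossGrad x w, expLossGrad x (w - s • expLossGrad x w)⟫ := by
  set p : Fin N → ℝ := fun n => exp (-⟪w, x n⟫)
  set g := ∑ n, p n • x n
  have hstep : ∀ n, exp (-⟪w - s • expLossGrad x w, x n⟫) = p n * exp (-(s * ⟪g, x n⟫)) :=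
    fun n => by
      rw [expLossGrad, smul_neg, sub_neg_eq_add, inner_add_left, real_inner_smul_left, neg_add,
        exp_add]
  have hgrad : expLossGrad x (w - s • expLossGrad x w)
      = -∑ n, (p n * exp (-(s * ⟪g, x n⟫))) • x n := by
    rw [expLossGrad]; simp only [hstep]
  rw [hgrad, show expLossGrad x w = -g from rfl, norm_neg, inner_neg_neg]
  exact norm_sq_le_inner_sum_exp_smul hx (fun n => (exp_pos _).le) hs hsL rfl

theorem inv_expLoss_add_le_inv_expLoss_gd_step (hx : ∀ n, ‖x n‖ ≤ 1) [Nonempty (Fin N)]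
    {γ : ℝ} (hγ0 : 0 ≤ γ) {u : EuclideanSpace ℝ (Fin d)} (hu : ‖u‖ ≤ 1)
    (hγ : ∀ n, γ ≤ ⟪u, x n⟫) (w : EuclideanSpace ℝ (Fin d)) {η : ℝ} (hη : 0 ≤ η)
    (hηL : η * expLoss x w ≤ 1) :
    (expLoss x w)⁻¹ + γ ^ 2 * η ≤ (expLoss x (w - η • expLossGrad x w))⁻¹ := by
  have hdecay : ∀ s ∈ Icc 0 η, γ ^ 2 * expLoss x (w - s • expLossGrad x w) ^ 2
      ≤ ⟪expLossGrad x w, expLossGrad x (w - s • expLossGrad x w)⟫ := fun s hs =>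
    calc γ ^ 2 * expLoss x (w - s • expLossGrad x w) ^ 2
        = (γ * expLoss x (w - s • expLossGrad x w)) ^ 2 := by ring
      _ ≤ ‖expLossGrad x (w - s • expLossGrad x w)‖ ^ 2 :=
          pow_le_pow_left₀ (mul_nonneg hγ0 (expLoss_pos _).le)
            (mul_expLoss_le_norm_expLossGrad hu hγ _) 2
      _ ≤ _ := norm_sq_expLossGrad_le_inner hx w hs.1
          ((mul_le_mul_of_nonneg_right hs.2 (expLoss_pos w).le).trans hηL)
  simpa using inv_add_mul_le_inv_of_hasDerivAt hη
    (fun s _ => hasDerivAt_expLoss_sub_smul w (expLossGrad x w) s)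
    (fun s _ => expLoss_pos _) (fun s hs => by simpa using hdecay s hs)

theorem inv_expLoss_add_le_inv_expLoss_gd_iterate (hx : ∀ n, ‖x n‖ ≤ 1) [Nonempty (Fin N)]
    {γ : ℝ} (hγ0 : 0 ≤ γ) {u : EuclideanSpace ℝ (Fin d)} (hu : ‖u‖ ≤ 1)
    (hγ : ∀ n, γ ≤ ⟪u, x n⟫) {η : ℝ} (hη : 0 ≤ η) {w : ℕ → EuclideanSpace ℝ (Fin d)}
    (hηL : η * expLoss x (w 0) ≤ 1) (hGD : ∀ t, w (t + 1) = w t - η • expLossGrad x (w t))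
    (t : ℕ) : (expLoss x (w 0))⁻¹ + γ ^ 2 * η * t ≤ (expLoss x (w t))⁻¹ := by
  induction t with
  | zero => simp
  | succ t ih =>
    have hdesc : expLoss x (w t) ≤ expLoss x (w 0) := by
      rw [← inv_le_inv₀ (expLoss_pos _) (expLoss_pos _)]
      nlinarith [mul_nonneg (mul_nonneg (sq_nonneg γ) hη) t.cast_nonneg (α := ℝ)]
    have hstep := inv_expLoss_add_le_inv_expLoss_gd_step hx hγ0 hu hγ (w t) hη
      ((mul_le_mul_of_nonneg_left hdesc hη).trans hηL)
    rw [hGD t]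
    push_cast
    linarith

end ExpLoss

/-- Logarithmic growth of the iterate norm for gradient descent on the exponential loss:
`‖w(t+1)‖ ≥ log(ηγ²(t+1) + 1/L(w(0)))`. -/
theorem gd_expLoss_norm_log_growth
    {d N : ℕ} (x : Fin N → EuclideanSpace ℝ (Fin d))
    (hx : ∀ n, ‖x n‖ ≤ 1)
    (hsep : ∃ wstar : EuclideanSpace ℝ (Fin d), ∀ n, 0 < ⟪wstar, x n⟫)
    (hNe : (Finset.univ : Finset (Fin N)).Nonempty)
    (γ : ℝ)
    (hγ : IsGreatest {m : ℝ | ∃ u : EuclideanSpace ℝ (Fin d), ‖u‖ = 1 ∧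
        m = Finset.univ.inf' hNe (fun n => ⟪u, x n⟫)} γ)
    (η : ℝ) (w : ℕ → EuclideanSpace ℝ (Fin d))
    (hη : 0 < η) (hη' : η < 1 / expLoss x (w 0))
    (hGD : ∀ t : ℕ, w (t + 1) = w t - η • expLossGrad x (w t)) :
    ∀ t : ℕ, Real.log (η * γ ^ 2 * (t + 1) + 1 / expLoss x (w 0)) ≤ ‖w (t + 1)‖ := by
  have : Nonempty (Fin N) := univ_nonempty_iff.1 hNe
  obtain ⟨u, hu, hγu⟩ := hγ.1
  have hmargin : ∀ n, γ ≤ ⟪u, x n⟫ := fun n => hγu ▸ inf'_le _ (mem_univ n)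
  have hγ0 : 0 ≤ γ := (pos_of_mem_upperBounds_margins hsep hNe hγ.2).le
  have hL0 := expLoss_pos (x := x) (w 0)
  have hηL : η * expLoss x (w 0) ≤ 1 := by
    rw [lt_div_iff₀ hL0] at hη'
    exact hη'.le
  intro t
  have hgrowth :=
    inv_expLoss_add_le_inv_expLoss_gd_iterate hx hγ0 hu.le hmargin hη.le hηL hGD (t + 1)
  push_cast at hgrowth
  calc log (η * γ ^ 2 * (t + 1) + 1 / expLoss x (w 0)) ≤ log (expLoss x (w (t + 1)))⁻¹ :=
        log_le_log (by positivity) (by rw [one_div]; linarith)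
    _ ≤ ‖w (t + 1)‖ := log_inv_expLoss_le_norm hx _
end
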